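/- Let f : ℝ × ℝ² → ℝ, u : ℝ × ℝ³ → ℝ³, and F : ℝ × ℝ³ → ℝ^{3×3} be smooth. Assume: (i) the kinematic boundary condition u̲·N_f = ∂_t f holds on ℝ × ℝ²; and (ii) the deformation equation ∂_t F_{ij} + Σ_{m=1}^{3} u_m ∂_m F_{ij} = Σ_{m=1}^{3} F_{mj} ∂_m u_i holds at every point (t, x', f(t,x')) of the graph, for all i, j. Then for all i, j ∈ {1,2,3} and all (t,x'): D_t(F̲_{ij}) = Σ_{s=1}^{2} F̲_{sj} ∂_s(u̲_i) + (F̲_j · N_f) · (∂₃ u_i)̲. -/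

import Mathlib

open scoped BigOperators

noncomputable section

/-! Partial derivatives of curried functions of several real variables. -/

/-- derivative in the 1st of 2 arguments -/
def d1_2 (g : ℝ → ℝ → ℝ) : ℝ → ℝ → ℝ := fun a b => deriv (fun s => g s b) a
/-- derivative in the 2nd of 2 arguments -/
def d2_2 (g : ℝ → ℝ → ℝ) : ℝ → ℝ → ℝ := fun a b => deriv (fun s => g a s) b

/-- derivative in the 1st of 3 arguments -/
def d1_3 (g : ℝ → ℝ → ℝ → ℝ) : ℝ → ℝ → ℝ → ℝ := fun a b c => deriv (fun s => g s b c) a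
/-- derivative in the 2nd of 3 arguments -/
def d2_3 (g : ℝ → ℝ → ℝ → ℝ) : ℝ → ℝ → ℝ → ℝ := fun a b c => deriv (fun s => g a s c) b
/-- derivative in the 3rd of 3 arguments -/
def d3_3 (g : ℝ → ℝ → ℝ → ℝ) : ℝ → ℝ → ℝ → ℝ := fun a b c => deriv (fun s => g a b s) c

/-- derivative in the 1st of 4 arguments -/
def d1_4 (g : ℝ → ℝ → ℝ → ℝ → ℝ) : ℝ → ℝ → ℝ → ℝ → ℝ := fun a b c e => deriv (fun s => g s b c e) a
/-- derivative in the 2nd of 4 arguments -/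
def d2_4 (g : ℝ → ℝ → ℝ → ℝ → ℝ) : ℝ → ℝ → ℝ → ℝ → ℝ := fun a b c e => deriv (fun s => g a s c e) b
/-- derivative in the 3rd of 4 arguments -/
def d3_4 (g : ℝ → ℝ → ℝ → ℝ → ℝ) : ℝ → ℝ → ℝ → ℝ → ℝ := fun a b c e => deriv (fun s => g a b s e) c
/-- derivative in the 4th of 4 arguments -/
def d4_4 (g : ℝ → ℝ → ℝ → ℝ → ℝ) : ℝ → ℝ → ℝ → ℝ → ℝ := fun a b c e => deriv (fun s => g a b c s) e

/-- spatial derivatives ∂₁, ∂₂, ∂₃ of v(t, x₁, x₂, x₃) -/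
def dsp : Fin 3 → (ℝ → ℝ → ℝ → ℝ → ℝ) → (ℝ → ℝ → ℝ → ℝ → ℝ) := ![d2_4, d3_4, d4_4]
/-- tangential derivatives ∂₁, ∂₂ of g(t, x₁, x₂) -/
def dtg : Fin 2 → (ℝ → ℝ → ℝ → ℝ) → (ℝ → ℝ → ℝ → ℝ) := ![d2_3, d3_3]
/-- spatial derivatives ∂₁, ∂₂, ∂₃ of v(x₁, x₂, x₃) -/
def dsp3 : Fin 3 → (ℝ → ℝ → ℝ → ℝ) → (ℝ → ℝ → ℝ → ℝ) := ![d1_3, d2_3, d3_3]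
/-- derivatives ∂₁, ∂₂ of g(x₁, x₂) -/
def dtg2 : Fin 2 → (ℝ → ℝ → ℝ) → (ℝ → ℝ → ℝ) := ![d1_2, d2_2]

/-- C^∞ smoothness for a function of 2 real variables -/
def smooth2 (g : ℝ → ℝ → ℝ) : Prop :=
  ContDiff ℝ (⊤ : ℕ∞) (fun p : ℝ × ℝ => g p.1 p.2)
/-- C^∞ smoothness for a function of 3 real variables -/
def smooth3 (g : ℝ → ℝ → ℝ → ℝ) : Prop :=
  ContDiff ℝ (⊤ : ℕ∞) (fun p : ℝ × ℝ × ℝ => g p.1 p.2.1 p.2.2)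
/-- C^∞ smoothness for a function of 4 real variables -/
def smooth4 (g : ℝ → ℝ → ℝ → ℝ → ℝ) : Prop :=
  ContDiff ℝ (⊤ : ℕ∞) (fun p : ℝ × ℝ × ℝ × ℝ => g p.1 p.2.1 p.2.2.1 p.2.2.2)

/-- trace of v(t,x₁,x₂,x₃) on the graph x₃ = f(t,x₁,x₂) -/
def tr (v : ℝ → ℝ → ℝ → ℝ → ℝ) (f : ℝ → ℝ → ℝ → ℝ) : ℝ → ℝ → ℝ → ℝ :=
  fun t x y => v t x y (f t x y)
/-- trace of v(x₁,x₂,x₃) on the graph x₃ = f(x₁,x₂) -/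
def tr2 (v : ℝ → ℝ → ℝ → ℝ) (f : ℝ → ℝ → ℝ) : ℝ → ℝ → ℝ :=
  fun x y => v x y (f x y)

/-- the (non-normalized) outward normal N_f = (−∂₁f, −∂₂f, 1) of the graph of f(t,·) -/
def Nf (f : ℝ → ℝ → ℝ → ℝ) : Fin 3 → ℝ → ℝ → ℝ → ℝ :=
  ![fun t x y => -(d2_3 f t x y), fun t x y => -(d3_3 f t x y), fun _ _ _ => 1]
/-- the (non-normalized) outward normal of the graph of a time-independent f -/
def Nf2 (f : ℝ → ℝ → ℝ) : Fin 3 → ℝ → ℝ → ℝ :=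
  ![fun x y => -(d1_2 f x y), fun x y => -(d2_2 f x y), fun _ _ => 1]

/-- the interface material derivative D_t g = ∂_t g + u̲₁ ∂₁ g + u̲₂ ∂₂ g -/
def Dt (u : Fin 3 → ℝ → ℝ → ℝ → ℝ → ℝ) (f : ℝ → ℝ → ℝ → ℝ)
    (g : ℝ → ℝ → ℝ → ℝ) : ℝ → ℝ → ℝ → ℝ :=
  fun t x y => d1_3 g t x y + tr (u 0) f t x y * d2_3 g t x y + tr (u 1) f t x y * d3_3 g t x y

/-- the material derivative D_t g = ∂_t g + u₁ ∂₁ g + u₂ ∂₂ g for given coefficients u₁,u₂ on ℝ×ℝ² -/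
def Dt2 (u : Fin 2 → ℝ → ℝ → ℝ → ℝ) (g : ℝ → ℝ → ℝ → ℝ) : ℝ → ℝ → ℝ → ℝ :=
  fun t x y => d1_3 g t x y + u 0 t x y * d2_3 g t x y + u 1 t x y * d3_3 g t x y

/-- the tangential deformation derivative D_{F_k} g = F̲₁ₖ ∂₁ g + F̲₂ₖ ∂₂ g -/
def DF (F : Fin 3 → Fin 3 → ℝ → ℝ → ℝ → ℝ → ℝ) (f : ℝ → ℝ → ℝ → ℝ) (k : Fin 3)
    (g : ℝ → ℝ → ℝ → ℝ) : ℝ → ℝ → ℝ → ℝ :=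
  fun t x y => tr (F 0 k) f t x y * d2_3 g t x y + tr (F 1 k) f t x y * d3_3 g t x y

/-- the full material derivative D_t g = ∂_t g + Σ u_m ∂_m g on ℝ×ℝ³ -/
def Dt4 (u : Fin 3 → ℝ → ℝ → ℝ → ℝ → ℝ) (g : ℝ → ℝ → ℝ → ℝ → ℝ) : ℝ → ℝ → ℝ → ℝ → ℝ :=
  fun t x y z => d1_4 g t x y z + ∑ m : Fin 3, u m t x y z * dsp m g t x y z

/-- the spatial Laplacian on ℝ×ℝ³ -/
def lap4 (g : ℝ → ℝ → ℝ → ℝ → ℝ) : ℝ → ℝ → ℝ → ℝ → ℝ :=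
  fun t x y z => ∑ k : Fin 3, dsp k (dsp k g) t x y z

/-!
The graph `x₃ = f` moves with the fluid, so the interface material derivative of a trace `v̲` is the
trace of the full material derivative `∂_t v + u · ∇v`; for `v = F_{ij}` the deformation equation
evaluates it as `Σₘ F̲_{mj} (∂ₘ u_i)̲`. The tangential derivatives `∂ₛ u̲_i` differ from `(∂ₛ u_i)̲` by
`(∂₃ u_i)̲ ∂ₛ f`, and these defects are absorbed by the normal component `F̲_j · N_f`.
-/

def uncurry3 (g : ℝ → ℝ → ℝ → ℝ) : ℝ × ℝ × ℝ → ℝ := fun p => g p.1 p.2.1 p.2.2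

def uncurry4 (v : ℝ → ℝ → ℝ → ℝ → ℝ) : ℝ × ℝ × ℝ × ℝ → ℝ :=
  fun p => v p.1 p.2.1 p.2.2.1 p.2.2.2

section PartialDerivatives

variable {g : ℝ → ℝ → ℝ → ℝ} {v : ℝ → ℝ → ℝ → ℝ → ℝ}

theorem hasDerivAt_d1_3 {a b c : ℝ} (hg : DifferentiableAt ℝ (uncurry3 g) (a, b, c)) :
    HasDerivAt (fun s => g s b c) (d1_3 g a b c) a :=
  (hg.comp (f := fun s : ℝ => (s, b, c)) a (by fun_prop)).hasDerivAt

theorem hasDerivAt_d2_3 {a b c : ℝ} (hg : DifferentiableAt ℝ (uncurry3 g) (a, b, c)) :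
    HasDerivAt (fun s => g a s c) (d2_3 g a b c) b :=
  (hg.comp (f := fun s : ℝ => (a, s, c)) b (by fun_prop)).hasDerivAt

theorem hasDerivAt_d3_3 {a b c : ℝ} (hg : DifferentiableAt ℝ (uncurry3 g) (a, b, c)) :
    HasDerivAt (fun s => g a b s) (d3_3 g a b c) c :=
  (hg.comp (f := fun s : ℝ => (a, b, s)) c (by fun_prop)).hasDerivAt

theorem hasDerivAt_curry4_comp_fderiv {c₁ c₂ c₃ c₄ : ℝ → ℝ} {d₁ d₂ d₃ d₄ s : ℝ}
    (hv : DifferentiableAt ℝ (uncurry4 v) (c₁ s, c₂ s, c₃ s, c₄ s))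
    (h₁ : HasDerivAt c₁ d₁ s) (h₂ : HasDerivAt c₂ d₂ s)
    (h₃ : HasDerivAt c₃ d₃ s) (h₄ : HasDerivAt c₄ d₄ s) :
    HasDerivAt (fun r => v (c₁ r) (c₂ r) (c₃ r) (c₄ r))
      (fderiv ℝ (uncurry4 v) (c₁ s, c₂ s, c₃ s, c₄ s) (d₁, d₂, d₃, d₄)) s :=
  (hv.hasFDerivAt.comp_hasDerivAt s (h₁.prodMk (h₂.prodMk (h₃.prodMk h₄))) :)

theorem fderiv_uncurry4_apply {a b c e : ℝ} (hv : DifferentiableAt ℝ (uncurry4 v) (a, b, c, e))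
    (d₁ d₂ d₃ d₄ : ℝ) :
    fderiv ℝ (uncurry4 v) (a, b, c, e) (d₁, d₂, d₃, d₄)
      = d1_4 v a b c e * d₁ + d2_4 v a b c e * d₂ + d3_4 v a b c e * d₃
        + d4_4 v a b c e * d₄ := by
  have h₁ : d1_4 v a b c e = fderiv ℝ (uncurry4 v) (a, b, c, e) (1, 0, 0, 0) :=
    (hasDerivAt_curry4_comp_fderiv hv (hasDerivAt_id a) (hasDerivAt_const a b)
      (hasDerivAt_const a c) (hasDerivAt_const a e)).deriv
  have h₂ : d2_4 v a b c e = fderiv ℝ (uncurry4 v) (a, b, c, e) (0, 1, 0, 0) :=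
    (hasDerivAt_curry4_comp_fderiv hv (hasDerivAt_const b a) (hasDerivAt_id b)
      (hasDerivAt_const b c) (hasDerivAt_const b e)).deriv
  have h₃ : d3_4 v a b c e = fderiv ℝ (uncurry4 v) (a, b, c, e) (0, 0, 1, 0) :=
    (hasDerivAt_curry4_comp_fderiv hv (hasDerivAt_const c a) (hasDerivAt_const c b)
      (hasDerivAt_id c) (hasDerivAt_const c e)).deriv
  have h₄ : d4_4 v a b c e = fderiv ℝ (uncurry4 v) (a, b, c, e) (0, 0, 0, 1) :=
    (hasDerivAt_curry4_comp_fderiv hv (hasDerivAt_const e a) (hasDerivAt_const e b)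
      (hasDerivAt_const e c) (hasDerivAt_id e)).deriv
  have hd : ((d₁, d₂, d₃, d₄) : ℝ × ℝ × ℝ × ℝ)
      = d₁ • (1, 0, 0, 0) + d₂ • (0, 1, 0, 0) + d₃ • (0, 0, 1, 0) + d₄ • (0, 0, 0, 1) := by
    simp
  rw [h₁, h₂, h₃, h₄, hd]
  simp only [map_add, map_smul, smul_eq_mul]
  ring

theorem hasDerivAt_curry4_comp {c₁ c₂ c₃ c₄ : ℝ → ℝ} {d₁ d₂ d₃ d₄ s : ℝ}
    (hv : DifferentiableAt ℝ (uncurry4 v) (c₁ s, c₂ s, c₃ s, c₄ s))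
    (h₁ : HasDerivAt c₁ d₁ s) (h₂ : HasDerivAt c₂ d₂ s)
    (h₃ : HasDerivAt c₃ d₃ s) (h₄ : HasDerivAt c₄ d₄ s) :
    HasDerivAt (fun r => v (c₁ r) (c₂ r) (c₃ r) (c₄ r))
      (d1_4 v (c₁ s) (c₂ s) (c₃ s) (c₄ s) * d₁ + d2_4 v (c₁ s) (c₂ s) (c₃ s) (c₄ s) * d₂
        + d3_4 v (c₁ s) (c₂ s) (c₃ s) (c₄ s) * d₃ + d4_4 v (c₁ s) (c₂ s) (c₃ s) (c₄ s) * d₄) s :=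
  fderiv_uncurry4_apply hv d₁ d₂ d₃ d₄ ▸ hasDerivAt_curry4_comp_fderiv hv h₁ h₂ h₃ h₄

end PartialDerivatives

section Trace

variable {v : ℝ → ℝ → ℝ → ℝ → ℝ} {f : ℝ → ℝ → ℝ → ℝ} {t x y : ℝ}

theorem d1_3_tr (hv : DifferentiableAt ℝ (uncurry4 v) (t, x, y, f t x y))
    (hf : DifferentiableAt ℝ (uncurry3 f) (t, x, y)) :
    d1_3 (tr v f) t x y = tr (d1_4 v) f t x y + tr (d4_4 v) f t x y * d1_3 f t x y := by
  simpa only [d1_3, tr, id, mul_one, mul_zero, add_zero, zero_add] using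
    (hasDerivAt_curry4_comp (c₁ := id) hv (hasDerivAt_id t) (hasDerivAt_const t x)
      (hasDerivAt_const t y) (hasDerivAt_d1_3 hf)).deriv

theorem d2_3_tr (hv : DifferentiableAt ℝ (uncurry4 v) (t, x, y, f t x y))
    (hf : DifferentiableAt ℝ (uncurry3 f) (t, x, y)) :
    d2_3 (tr v f) t x y = tr (d2_4 v) f t x y + tr (d4_4 v) f t x y * d2_3 f t x y := by
  simpa only [d2_3, tr, id, mul_one, mul_zero, add_zero, zero_add] using
    (hasDerivAt_curry4_comp (c₂ := id) hv (hasDerivAt_const x t) (hasDerivAt_id x)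
      (hasDerivAt_const x y) (hasDerivAt_d2_3 hf)).deriv

theorem d3_3_tr (hv : DifferentiableAt ℝ (uncurry4 v) (t, x, y, f t x y))
    (hf : DifferentiableAt ℝ (uncurry3 f) (t, x, y)) :
    d3_3 (tr v f) t x y = tr (d3_4 v) f t x y + tr (d4_4 v) f t x y * d3_3 f t x y := by
  simpa only [d3_3, tr, id, mul_one, mul_zero, add_zero, zero_add] using
    (hasDerivAt_curry4_comp (c₃ := id) hv (hasDerivAt_const y t)
      (hasDerivAt_const y x) (hasDerivAt_id y) (hasDerivAt_d3_3 hf)).deriv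

theorem sum_mul_dtg_tr_add_normal (hv : DifferentiableAt ℝ (uncurry4 v) (t, x, y, f t x y))
    (hf : DifferentiableAt ℝ (uncurry3 f) (t, x, y)) (a : Fin 3 → ℝ) :
    (∑ s : Fin 2, a s.castSucc * dtg s (tr v f) t x y)
        + (∑ m : Fin 3, a m * Nf f m t x y) * tr (dsp 2 v) f t x y
      = ∑ m : Fin 3, a m * tr (dsp m v) f t x y := by
  simp only [Fin.sum_univ_two, Fin.sum_univ_three, dtg, dsp, Nf, Matrix.cons_val_zero,
    Matrix.cons_val_one, Matrix.cons_val_two, Matrix.head_cons, Matrix.tail_cons]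
  rw [d2_3_tr hv hf, d3_3_tr hv hf]
  simp only [Fin.castSucc_zero, Fin.castSucc_one]
  ring

theorem Dt_tr_of_kinematic {u : Fin 3 → ℝ → ℝ → ℝ → ℝ → ℝ}
    (hv : DifferentiableAt ℝ (uncurry4 v) (t, x, y, f t x y))
    (hf : DifferentiableAt ℝ (uncurry3 f) (t, x, y))
    (hkbc : ∑ k : Fin 3, tr (u k) f t x y * Nf f k t x y = d1_3 f t x y) :
    Dt u f (tr v f) t x y = tr (Dt4 u v) f t x y := by
  simp only [Fin.sum_univ_three, Nf, Matrix.cons_val_zero, Matrix.cons_val_one,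
    Matrix.cons_val_two, Matrix.head_cons, Matrix.tail_cons, tr] at hkbc
  rw [Dt, d1_3_tr hv hf, d2_3_tr hv hf, d3_3_tr hv hf]
  simp only [Dt4, tr, Fin.sum_univ_three, dsp, Matrix.cons_val_zero, Matrix.cons_val_one,
    Matrix.cons_val_two, Matrix.head_cons, Matrix.tail_cons]
  linear_combination d4_4 v t x y (f t x y) * hkbc.symm

end Trace

/-- trace identity for the deformation equation on the free interface. -/
theorem trace_deformation_equation
    (f : ℝ → ℝ → ℝ → ℝ) (u : Fin 3 → ℝ → ℝ → ℝ → ℝ → ℝ)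
    (F : Fin 3 → Fin 3 → ℝ → ℝ → ℝ → ℝ → ℝ)
    (hf : smooth3 f) (hu : ∀ i, smooth4 (u i)) (hF : ∀ i j, smooth4 (F i j))
    (hkbc : ∀ t x y, (∑ k : Fin 3, tr (u k) f t x y * Nf f k t x y) = d1_3 f t x y)
    (hdef : ∀ i j : Fin 3, ∀ t x y,
      tr (d1_4 (F i j)) f t x y
        + ∑ m : Fin 3, tr (u m) f t x y * tr (dsp m (F i j)) f t x y
        = ∑ m : Fin 3, tr (F m j) f t x y * tr (dsp m (u i)) f t x y) :
    ∀ i j : Fin 3, ∀ t x y,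
      Dt u f (tr (F i j) f) t x y
        = (∑ s : Fin 2, tr (F s.castSucc j) f t x y * dtg s (tr (u i) f) t x y)
          + (∑ m : Fin 3, tr (F m j) f t x y * Nf f m t x y) * tr (dsp 2 (u i)) f t x y := by
  intro i j t x y
  have hf' : DifferentiableAt ℝ (uncurry3 f) (t, x, y) := hf.differentiable (by simp) _
  have hu' : DifferentiableAt ℝ (uncurry4 (u i)) (t, x, y, f t x y) :=
    (hu i).differentiable (by simp) _
  have hF' : DifferentiableAt ℝ (uncurry4 (F i j)) (t, x, y, f t x y) :=
    (hF i j).differentiable (by simp) _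
  rw [Dt_tr_of_kinematic hF' hf' (hkbc t x y),
    sum_mul_dtg_tr_add_normal hu' hf' fun m => tr (F m j) f t x y]
  exact hdef i j t x y
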